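/- Let A be a seminormed ring. Every spectrally reduced ideal of A is contained in a spectrally reduced ideal that is maximal with respect to inclusion among the spectrally reduced ideals of A. -/

import Mathlib

open Filter Topology

/-- A bounded power-multiplicative (nonarchimedean, submultiplicative) ring seminorm
on a seminormed commutative ring. -/
structure IsBddPowMulSeminorm {A : Type*} [SeminormedCommRing A] (φ : A → ℝ) : Prop where
  nonneg : ∀ f, 0 ≤ φ f
  map_zero : φ 0 = 0
  map_one : φ 1 = 1
  map_neg : ∀ f, φ (-f) = φ f
  nonarch : ∀ f g, φ (f + g) ≤ max (φ f) (φ g)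
  submul : ∀ f g, φ (f * g) ≤ φ f * φ g
  pow_mul : ∀ f, ∀ n : ℕ, 1 ≤ n → φ (f ^ n) = φ f ^ n
  bounded : ∃ C > 0, ∀ f, φ f ≤ C * ‖f‖

/-- An ideal is spectrally reduced if it is the kernel of some bounded
power-multiplicative seminorm. -/
def IsSpectrallyReduced {A : Type*} [SeminormedCommRing A] (I : Ideal A) : Prop :=
  ∃ φ : A → ℝ, IsBddPowMulSeminorm φ ∧ ∀ f, f ∈ I ↔ φ f = 0

/-!
Every bounded power-multiplicative seminorm is bounded by the norm itself, so for a spectrally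
reduced ideal `J` the pointwise supremum of all such seminorms vanishing on `J` is again one, the
maximal seminorm of `J`. It is antitone in `J`, so along a chain of spectrally reduced ideals the
maximal seminorms form a downward directed family; the infimum of such a family is again a bounded
power-multiplicative seminorm, and its kernel is a spectrally reduced upper bound of the chain.
Zorn's lemma finishes the proof.
-/

open Set

lemma Real.iInf_pow {ι : Sort*} [Nonempty ι] {f : ι → ℝ} (hf : ∀ i, 0 ≤ f i) (n : ℕ) :
    (⨅ i, f i) ^ n = ⨅ i, f i ^ n := by
  lift f to ι → NNReal using hf
  have := (pow_left_mono n).map_ciInf_of_continuousAt (continuous_pow n).continuousAt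
    (OrderBot.bddBelow (range f))
  rw [← NNReal.coe_iInf, ← NNReal.coe_pow, this, NNReal.coe_iInf]
  simp only [NNReal.coe_pow]

namespace IsBddPowMulSeminorm

variable {A : Type*} [SeminormedCommRing A]

theorem le_norm {φ : A → ℝ} (hφ : IsBddPowMulSeminorm φ) (f : A) : φ f ≤ ‖f‖ :=
  contraction_of_isPowMul_of_boundedWrt (SeminormedRing.toRingSeminorm A)
    (fun f _ hn => hφ.pow_mul f _ hn) (f := RingHom.id A) hφ.bounded f

def ker {φ : A → ℝ} (hφ : IsBddPowMulSeminorm φ) : Ideal A where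
  carrier := {f | φ f = 0}
  zero_mem' := hφ.map_zero
  add_mem' {f g} hf hg := le_antisymm
    ((hφ.nonarch f g).trans_eq (by rw [hf.out, hg.out, max_self])) (hφ.nonneg _)
  smul_mem' c f hf := le_antisymm
    ((hφ.submul c f).trans_eq (by rw [hf.out, mul_zero])) (hφ.nonneg _)

theorem isSpectrallyReduced_ker {φ : A → ℝ} (hφ : IsBddPowMulSeminorm φ) :
    IsSpectrallyReduced hφ.ker :=
  ⟨φ, hφ, fun _ => Iff.rfl⟩

variable {ι : Sort*} [Nonempty ι] {φ : ι → A → ℝ}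

theorem iSup (hφ : ∀ i, IsBddPowMulSeminorm (φ i)) :
    IsBddPowMulSeminorm (fun f => ⨆ i, φ i f) := by
  have le_sup (i : ι) (f : A) : φ i f ≤ ⨆ i, φ i f :=
    le_ciSup ⟨‖f‖, forall_mem_range.2 fun i => (hφ i).le_norm f⟩ i
  have sup_nonneg (f : A) : 0 ≤ ⨆ i, φ i f := Real.iSup_nonneg fun i => (hφ i).nonneg f
  refine ⟨sup_nonneg, ?_, ?_, fun f => ?_, fun f g => ?_, fun f g => ?_, fun f n hn => ?_, ?_⟩
  · simp only [fun i => (hφ i).map_zero, ciSup_const]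
  · simp only [fun i => (hφ i).map_one, ciSup_const]
  · simp only [fun i => (hφ i).map_neg f]
  · exact ciSup_le fun i => ((hφ i).nonarch f g).trans (max_le_max (le_sup i f) (le_sup i g))
  · exact ciSup_le fun i => ((hφ i).submul f g).trans
      (mul_le_mul (le_sup i f) (le_sup i g) ((hφ i).nonneg g) (sup_nonneg f))
  · simp only [fun i => (hφ i).pow_mul f n hn]
    exact (Real.iSup_pow (fun i => (hφ i).nonneg f) n).symm
  · exact ⟨1, one_pos, fun f => (one_mul ‖f‖).symm ▸ ciSup_le fun i => (hφ i).le_norm f⟩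

theorem iInf (hφ : ∀ i, IsBddPowMulSeminorm (φ i)) (hdir : Directed (· ≥ ·) φ) :
    IsBddPowMulSeminorm (fun f => ⨅ i, φ i f) := by
  have inf_le (i : ι) (f : A) : ⨅ i, φ i f ≤ φ i f :=
    ciInf_le ⟨0, forall_mem_range.2 fun i => (hφ i).nonneg f⟩ i
  have inf_nonneg (f : A) : 0 ≤ ⨅ i, φ i f := le_ciInf fun i => (hφ i).nonneg f
  refine ⟨inf_nonneg, ?_, ?_, fun f => ?_, fun f g => ?_, fun f g => ?_, fun f n hn => ?_, ?_⟩
  · simp only [fun i => (hφ i).map_zero, ciInf_const]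
  · simp only [fun i => (hφ i).map_one, ciInf_const]
  · simp only [fun i => (hφ i).map_neg f]
  · have le_max_of_directed (i j : ι) : ⨅ i, φ i (f + g) ≤ max (φ i f) (φ j g) := by
      obtain ⟨k, hki, hkj⟩ := hdir i j
      exact (inf_le k _).trans (((hφ k).nonarch f g).trans (max_le_max (hki f) (hkj g)))
    by_cases hf : ∀ i, ⨅ i, φ i (f + g) ≤ φ i f
    · exact (le_ciInf hf).trans (le_max_left _ _)
    · obtain ⟨i, hi⟩ := not_forall.1 hf
      exact (le_ciInf fun j => (le_max_iff.1 (le_max_of_directed i j)).resolve_left hi).trans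
        (le_max_right _ _)
  · rw [Real.mul_iInf_of_nonneg (inf_nonneg f)]
    refine le_ciInf fun j => ?_
    rw [Real.iInf_mul_of_nonneg ((hφ j).nonneg g)]
    refine le_ciInf fun i => ?_
    obtain ⟨k, hki, hkj⟩ := hdir i j
    calc ⨅ i, φ i (f * g) ≤ φ k (f * g) := inf_le k _
      _ ≤ φ k f * φ k g := (hφ k).submul f g
      _ ≤ φ i f * φ j g := mul_le_mul (hki f) (hkj g) ((hφ k).nonneg g) ((hφ i).nonneg f)
  · simp only [fun i => (hφ i).pow_mul f n hn]
    exact (Real.iInf_pow (fun i => (hφ i).nonneg f) n).symm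
  · exact ⟨1, one_pos, fun f =>
      (one_mul ‖f‖).symm ▸ (inf_le (Classical.arbitrary ι) f).trans ((hφ _).le_norm f)⟩

end IsBddPowMulSeminorm

namespace Ideal

variable {A : Type*} [SeminormedCommRing A]

def vanishingSeminorms (J : Ideal A) : Set (A → ℝ) :=
  {φ | IsBddPowMulSeminorm φ ∧ ∀ g ∈ J, φ g = 0}

/-- The largest bounded power-multiplicative seminorm vanishing on `J`, when there is one;
otherwise the supremum is over an empty family and `maxSeminorm J = 0`. -/
noncomputable def maxSeminorm (J : Ideal A) (f : A) : ℝ :=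
  ⨆ φ : J.vanishingSeminorms, φ.1 f

theorem maxSeminorm_nonneg (J : Ideal A) (f : A) : 0 ≤ J.maxSeminorm f :=
  Real.iSup_nonneg fun φ => φ.2.1.nonneg f

theorem maxSeminorm_eq_zero_of_mem {J : Ideal A} {f : A} (hf : f ∈ J) : J.maxSeminorm f = 0 :=
  (iSup_congr fun φ => φ.2.2 f hf).trans Real.iSup_const_zero

theorem le_maxSeminorm {J : Ideal A} {φ : A → ℝ} (hφ : φ ∈ J.vanishingSeminorms) (f : A) :
    φ f ≤ J.maxSeminorm f :=
  le_ciSup (f := fun ψ : J.vanishingSeminorms => ψ.1 f)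
    ⟨‖f‖, forall_mem_range.2 fun ψ => ψ.2.1.le_norm f⟩ ⟨φ, hφ⟩

theorem antitone_maxSeminorm : Antitone (maxSeminorm : Ideal A → A → ℝ) := fun _ _ hJK f =>
  Real.iSup_le (fun φ => le_maxSeminorm ⟨φ.2.1, fun g hg => φ.2.2 g (hJK hg)⟩ f)
    (maxSeminorm_nonneg _ f)

end Ideal

theorem IsSpectrallyReduced.isBddPowMulSeminorm_maxSeminorm {A : Type*} [SeminormedCommRing A]
    {J : Ideal A} (hJ : IsSpectrallyReduced J) : IsBddPowMulSeminorm J.maxSeminorm := by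
  obtain ⟨φ, hφ, hker⟩ := hJ
  have : Nonempty J.vanishingSeminorms := ⟨φ, hφ, fun g => (hker g).1⟩
  exact IsBddPowMulSeminorm.iSup fun φ => φ.2.1

theorem exists_isSpectrallyReduced_ge_of_isChain {A : Type*} [SeminormedCommRing A]
    {c : Set (Ideal A)} (hc : ∀ J ∈ c, IsSpectrallyReduced J) (hchain : IsChain (· ≤ ·) c)
    (hne : c.Nonempty) :
    ∃ m, IsSpectrallyReduced m ∧ ∀ J ∈ c, J ≤ m := by
  have := hne.to_subtype
  have hψ : IsBddPowMulSeminorm (fun f => ⨅ J : c, J.1.maxSeminorm f) :=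
    .iInf (fun J => (hc J J.2).isBddPowMulSeminorm_maxSeminorm)
      ((directedOn_iff_directed.1 hchain.directedOn).mono_comp (· ≤ ·) (rb := (· ≥ ·))
        fun _ _ h => Ideal.antitone_maxSeminorm h)
  refine ⟨hψ.ker, hψ.isSpectrallyReduced_ker, fun J hJ f hf => le_antisymm ?_ (hψ.nonneg f)⟩
  calc ⨅ J : c, J.1.maxSeminorm f
      ≤ J.maxSeminorm f :=
        ciInf_le ⟨0, forall_mem_range.2 fun K : c => K.1.maxSeminorm_nonneg f⟩ ⟨J, hJ⟩
    _ = 0 := Ideal.maxSeminorm_eq_zero_of_mem hf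

theorem exists_maximal_spectrally_reduced_ideal_ge_general
    {A : Type*} [SeminormedCommRing A]
    (I : Ideal A) (hI : IsSpectrallyReduced I) :
    ∃ m : Ideal A, IsSpectrallyReduced m ∧ I ≤ m ∧
      ∀ J : Ideal A, IsSpectrallyReduced J → m ≤ J → J = m := by
  obtain ⟨m, hIm, hm⟩ := zorn_le_nonempty₀ {J : Ideal A | IsSpectrallyReduced J}
    (fun c hc hchain J hJ => exists_isSpectrallyReduced_ge_of_isChain hc hchain ⟨J, hJ⟩) I hI
  exact ⟨m, hm.prop, hIm, fun J hJ hmJ => hm.eq_of_ge hJ hmJ⟩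

/-- Every spectrally reduced ideal of a seminormed ring is contained in a maximal
spectrally reduced ideal. -/
theorem exists_maximal_spectrally_reduced_ideal_ge
    {A : Type*} [SeminormedCommRing A] [NormOneClass A]
    (hA : IsNonarchimedean (fun a : A => ‖a‖))
    (I : Ideal A) (hI : IsSpectrallyReduced I) :
    ∃ m : Ideal A, IsSpectrallyReduced m ∧ I ≤ m ∧
      ∀ J : Ideal A, IsSpectrallyReduced J → m ≤ J → J = m :=
  exists_maximal_spectrally_reduced_ideal_ge_general I hI
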